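/- arXiv:2203.11638 — 2 statements merged into one kernel-verified Lean document; each statement's English description precedes it below -/
import Mathlib

section
/- Let $c>0$, $h(c)=\frac{\pi}{2cE(1-1/c^2)}$ where $E(m)=\int_0^{\pi/2}\sqrt{1-m\sin^2\theta}\,d\theta$, and define $f(\xi)=\cos^2\left(\frac{\pi}{4}-\frac{c}{2}h(c)E\left(\arcsin(\xi/c)\mid 1-\frac{1}{c^2}\right)\right)$ for $\xi\in[-c,c]$. Then $f$ satisfies the ODE $f'(\xi)\sqrt{\frac{c^4-\xi^2c^2}{\xi^2+c^4-\xi^2c^2}}=h(c)\sqrt{f(\xi)(1-f(\xi))}$ for all $\xi\in(-c,c)$. -/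
/-- Incomplete elliptic integral of the second kind. -/
noncomputable def ellipticE (φ m : ℝ) : ℝ := ∫ θ in (0:ℝ)..φ, Real.sqrt (1 - m * Real.sin θ ^ 2)

/-- Complete elliptic integral of the second kind. -/
noncomputable def ellipticEc (m : ℝ) : ℝ := ellipticE (Real.pi / 2) m

/-!
With `m = 1 - 1/c²`, `s = ξ/c` and `A = π/4 - (c/2) h E(arcsin s | m)` we have `f = cos² A`, and
the fundamental theorem of calculus with the chain rule gives
`f' = h cos A sin A · √(1 - m s²) / √(1 - s²)`. The quotient of square roots is exactly the
reciprocal of the weight `√((c⁴ - ξ²c²) / (ξ² + c⁴ - ξ²c²))`. Finally `(c/2) h = π / (4 E(m))` and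
`|E(φ | m)| ≤ E(m)` for `|φ| ≤ π/2` put `A` in `[0, π/2]`, where
`√(f (1 - f)) = |cos A sin A| = cos A sin A`.
-/

open Real Set

section EllipticE

variable {m : ℝ}

lemma continuous_sqrt_one_sub_mul_sin_sq (m : ℝ) :
    Continuous fun θ : ℝ => √(1 - m * sin θ ^ 2) := by
  fun_prop

lemma one_sub_mul_sin_sq_pos (hm : m < 1) (θ : ℝ) : 0 < 1 - m * sin θ ^ 2 := by
  have := sin_sq_le_one θ
  rcases le_total 0 m with h | h <;> nlinarith [sq_nonneg (sin θ)]

lemma hasDerivAt_ellipticE (φ m : ℝ) :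
    HasDerivAt (fun φ => ellipticE φ m) (√(1 - m * sin φ ^ 2)) φ :=
  intervalIntegral.integral_hasDerivAt_right
    ((continuous_sqrt_one_sub_mul_sin_sq m).intervalIntegrable _ _)
    (continuous_sqrt_one_sub_mul_sin_sq m).aestronglyMeasurable.stronglyMeasurableAtFilter
    (continuous_sqrt_one_sub_mul_sin_sq m).continuousAt

lemma ellipticE_neg (φ m : ℝ) : ellipticE (-φ) m = -ellipticE φ m := by
  have h := intervalIntegral.integral_comp_neg (a := 0) (b := φ)
    (fun θ => √(1 - m * sin θ ^ 2))
  simp only [sin_neg, neg_sq, neg_zero] at h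
  rw [ellipticE, ellipticE, h]
  exact intervalIntegral.integral_symm _ _

lemma ellipticE_nonneg {φ : ℝ} (hφ : 0 ≤ φ) : 0 ≤ ellipticE φ m :=
  intervalIntegral.integral_nonneg hφ fun _ _ => sqrt_nonneg _

lemma ellipticE_le_ellipticEc {φ : ℝ} (h₀ : 0 ≤ φ) (h₁ : φ ≤ π / 2) :
    ellipticE φ m ≤ ellipticEc m :=
  intervalIntegral.integral_mono_interval le_rfl h₀ h₁
    (Filter.Eventually.of_forall fun _ => sqrt_nonneg _)
    ((continuous_sqrt_one_sub_mul_sin_sq m).intervalIntegrable _ _)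

lemma abs_ellipticE_le_ellipticEc {φ : ℝ} (hφ : |φ| ≤ π / 2) :
    |ellipticE φ m| ≤ ellipticEc m := by
  rcases le_total 0 φ with h | h
  · rw [abs_of_nonneg (ellipticE_nonneg h)]
    exact ellipticE_le_ellipticEc h ((le_abs_self φ).trans hφ)
  · rw [← neg_neg φ, ellipticE_neg, abs_neg, abs_of_nonneg (ellipticE_nonneg (neg_nonneg.2 h))]
    exact ellipticE_le_ellipticEc (neg_nonneg.2 h) ((neg_le_abs φ).trans hφ)

lemma ellipticEc_pos (hm : m < 1) : 0 < ellipticEc m :=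
  intervalIntegral.intervalIntegral_pos_of_pos
    ((continuous_sqrt_one_sub_mul_sin_sq m).intervalIntegrable _ _)
    (fun θ => sqrt_pos.2 (one_sub_mul_sin_sq_pos hm θ)) (by positivity)

lemma hasDerivAt_ellipticE_arcsin {x : ℝ} (hx : x ∈ Ioo (-1) 1) :
    HasDerivAt (fun x => ellipticE (arcsin x) m) (√(1 - m * x ^ 2) / √(1 - x ^ 2)) x := by
  have h := (hasDerivAt_ellipticE (arcsin x) m).comp x (hasDerivAt_arcsin hx.1.ne' hx.2.ne)
  rwa [sin_arcsin hx.1.le hx.2.le, ← div_eq_mul_one_div] at h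

end EllipticE

lemma sqrt_div_sqrt_mul_sqrt_weight_eq_one {c ξ : ℝ} (hc : 0 < c) (hξ : ξ ∈ Ioo (-c) c) :
    √(1 - (1 - 1 / c ^ 2) * (ξ / c) ^ 2) / √(1 - (ξ / c) ^ 2)
      * √((c ^ 4 - ξ ^ 2 * c ^ 2) / (ξ ^ 2 + c ^ 4 - ξ ^ 2 * c ^ 2)) = 1 := by
  have hξc : 0 < c ^ 2 - ξ ^ 2 := by nlinarith [hξ.1, hξ.2]
  have hnum : 0 < c ^ 4 - ξ ^ 2 * c ^ 2 := by nlinarith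
  have hden : 0 < ξ ^ 2 + c ^ 4 - ξ ^ 2 * c ^ 2 := by nlinarith [sq_nonneg ξ]
  have h₁ : 1 - (1 - 1 / c ^ 2) * (ξ / c) ^ 2 = (ξ ^ 2 + c ^ 4 - ξ ^ 2 * c ^ 2) / c ^ 4 := by
    field_simp; ring
  have h₂ : 1 - (ξ / c) ^ 2 = (c ^ 4 - ξ ^ 2 * c ^ 2) / c ^ 4 := by
    field_simp
  rw [h₁, h₂, ← sqrt_div' _ (by positivity), ← sqrt_mul' _ (by positivity), ← sqrt_one]
  congr 1
  field_simp

lemma sqrt_cos_sq_mul_one_sub_cos_sq {A : ℝ} (hA : A ∈ Icc 0 (π / 2)) :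
    √(cos A ^ 2 * (1 - cos A ^ 2)) = cos A * sin A := by
  have hcos : 0 ≤ cos A := cos_nonneg_of_mem_Icc ⟨by linarith [pi_pos, hA.1], hA.2⟩
  have hsin : 0 ≤ sin A := sin_nonneg_of_nonneg_of_le_pi hA.1 (by linarith [pi_pos, hA.2])
  rw [← sin_sq, ← mul_pow, sqrt_sq (mul_nonneg hcos hsin)]

lemma pi_div_four_sub_mem_Icc {E₀ e : ℝ} (hE₀ : 0 < E₀) (he : |e| ≤ E₀) :
    π / 4 - π / (4 * E₀) * e ∈ Icc 0 (π / 2) := by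
  have hk : 0 < π / (4 * E₀) := by positivity
  have hke : π / (4 * E₀) * E₀ = π / 4 := by field_simp
  rw [abs_le] at he
  constructor <;> nlinarith [mul_le_mul_of_nonneg_left he.1 hk.le, mul_le_mul_of_nonneg_left he.2 hk.le]

lemma HasDerivAt.cos_sq_sub_mul {g : ℝ → ℝ} {g' a k x : ℝ} (hg : HasDerivAt g g' x) :
    HasDerivAt (fun t => Real.cos (a - k * g t) ^ 2)
      (2 * k * g' * (Real.cos (a - k * g x) * Real.sin (a - k * g x))) x := by
  refine ((((hasDerivAt_const x a).sub (hg.const_mul k)).cos).pow 2).congr_deriv ?_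
  norm_num
  ring

theorem stmt_6 (c : ℝ) (hc : 0 < c)
    (h : ℝ) (hh : h = Real.pi / (2 * c * ellipticEc (1 - 1 / c ^ 2)))
    (f : ℝ → ℝ)
    (hf : ∀ ξ, f ξ =
      Real.cos (Real.pi / 4 - (c / 2) * h * ellipticE (Real.arcsin (ξ / c)) (1 - 1 / c ^ 2)) ^ 2) :
    ∀ ξ ∈ Set.Ioo (-c) c,
      deriv f ξ * Real.sqrt ((c ^ 4 - ξ ^ 2 * c ^ 2) / (ξ ^ 2 + c ^ 4 - ξ ^ 2 * c ^ 2))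
        = h * Real.sqrt (f ξ * (1 - f ξ)) := by
  intro ξ hξ
  set m := 1 - 1 / c ^ 2
  have hm : m < 1 := sub_lt_self 1 (by positivity)
  have hs : ξ / c ∈ Ioo (-1) 1 := by
    constructor
    · rw [lt_div_iff₀ hc]; linarith [hξ.1]
    · rw [div_lt_one hc]; exact hξ.2
  have hdiv : HasDerivAt (fun t => t / c) (1 / c) ξ := (hasDerivAt_id ξ).div_const c
  set R := √(1 - m * (ξ / c) ^ 2) / √(1 - (ξ / c) ^ 2)
  have hE : HasDerivAt (fun t => ellipticE (arcsin (t / c)) m) (R * (1 / c)) ξ :=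
    HasDerivAt.comp (h₂ := fun x => ellipticE (arcsin x) m) ξ (hasDerivAt_ellipticE_arcsin hs) hdiv
  have hf' := (hE.cos_sq_sub_mul (a := π / 4) (k := c / 2 * h)).congr_of_eventuallyEq
    (Filter.Eventually.of_forall hf)
  set A := π / 4 - c / 2 * h * ellipticE (arcsin (ξ / c)) m
  have hA : A ∈ Icc 0 (π / 2) := by
    have hscale : c / 2 * h = π / (4 * ellipticEc m) := by rw [hh]; field_simp; ring
    simp only [A, hscale]
    exact pi_div_four_sub_mem_Icc (ellipticEc_pos hm)
      (abs_ellipticE_le_ellipticEc (abs_le.2 ⟨neg_pi_div_two_le_arcsin _, arcsin_le_pi_div_two _⟩))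
  have hcoef : 2 * (c / 2 * h) * (R * (1 / c)) = h * R := by field_simp
  rw [hf'.deriv, hcoef, hf ξ, sqrt_cos_sq_mul_one_sub_cos_sq hA]
  linear_combination h * cos A * sin A * sqrt_div_sqrt_mul_sqrt_weight_eq_one hc hξ
end

section
/- Let $x\in\mathbb{R}^n$, $x\neq 0$, $y\in\mathbb{R}$, $c>0$, $r^2=|x|^2c^4+y^2$ with $y\neq 0$. Define the $n\times(n+1)$ matrix $A'=\left(I-\frac{1-|y|/r}{|x|^2}xx^\top,\ -\frac{c^2}{r|y|}xy\right)$. Then $A'A'^\top=I_n$. -/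
/-! Write `A' = (P | b x)` with `P = I - a x xᵀ` symmetric. Then
`A' A'ᵀ = P² + b² x xᵀ = I + (a² |x|² - 2a + b²) x xᵀ`, and for `a = (1 - t) / |x|²` the
coefficient is `(t² + b² |x|² - 1) / |x|²`, which vanishes because
`(|y| / r)² + (c² / r)² |x|² = 1` is exactly the defining relation of `r`. -/

open Matrix

theorem one_sub_smul_vecMulVec_mul_transpose {R ι : Type*} [CommRing R] [Fintype ι]
    [DecidableEq ι] (a : R) (x : ι → R) :
    (1 - a • vecMulVec x x) * (1 - a • vecMulVec x x)ᵀ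
      = 1 + (a ^ 2 * (x ⬝ᵥ x) - 2 * a) • vecMulVec x x := by
  simp only [transpose_sub, transpose_one, transpose_smul, transpose_vecMulVec, sub_mul, mul_sub,
    one_mul, mul_one, smul_mul_smul_comm, vecMulVec_mul_vecMulVec, vecMulVec_smul]
  module

theorem mul_transpose_eq_init_add_vecMulVec_last {R m : Type*} [CommRing R] {n : ℕ}
    (A : Matrix m (Fin (n + 1)) R) :
    A * Aᵀ = A.submatrix id Fin.castSucc * (A.submatrix id Fin.castSucc)ᵀ
      + vecMulVec (fun i ↦ A i (Fin.last n)) (fun i ↦ A i (Fin.last n)) := by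
  ext i k
  simp [mul_apply, Fin.sum_univ_castSucc, vecMulVec_apply]

theorem one_sub_div_sq_mul_sub_two_mul_add_sq_eq_zero {K : Type*} [Field K] {s t b : K}
    (hs : s ≠ 0) (h : t ^ 2 + b ^ 2 * s = 1) : ((1 - t) / s) ^ 2 * s - 2 * ((1 - t) / s) + b ^ 2 = 0 := by
  field_simp
  linear_combination h

theorem stmt_14_general (n : ℕ) (c : ℝ) (x : EuclideanSpace ℝ (Fin n)) (y : ℝ)
    (hy : y ≠ 0)
    (r : ℝ) (hr : r ^ 2 = ‖x‖ ^ 2 * c ^ 4 + y ^ 2)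
    (A' : Matrix (Fin n) (Fin (n + 1)) ℝ)
    (hA' : ∀ (i : Fin n) (j : Fin (n + 1)), A' i j =
      if h : (j : ℕ) < n then
        (if i = ⟨j, h⟩ then 1 else 0) - ((1 - |y| / r) / ‖x‖ ^ 2) * x i * x ⟨j, h⟩
      else -(c ^ 2 / (r * |y|)) * x i * y) :
    A' * A'.transpose = 1 := by
  set a := (1 - |y| / r) / ‖x‖ ^ 2
  set b := -(c ^ 2 / (r * |y|)) * y
  have hnorm : ‖x‖ ^ 2 = x.ofLp ⬝ᵥ x.ofLp := by
    rw [← real_inner_self_eq_norm_sq, EuclideanSpace.inner_eq_star_dotProduct, star_trivial]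
  have hinit : A'.submatrix id Fin.castSucc = 1 - a • vecMulVec x.ofLp x.ofLp := by
    ext i j
    simp [hA', one_apply, vecMulVec_apply, mul_assoc]
  have hlast : (fun i ↦ A' i (Fin.last n)) = b • x.ofLp := by
    ext i
    simp only [hA', Fin.val_last, lt_irrefl, dite_false, Pi.smul_apply, smul_eq_mul, b]
    ring
  have hr0 : r ≠ 0 :=
    sq_pos_iff.mp (hr ▸ add_pos_of_nonneg_of_pos (by positivity) (sq_pos_of_ne_zero hy))
  have hunit : (|y| / r) ^ 2 + b ^ 2 * ‖x‖ ^ 2 = 1 := by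
    simp only [b, neg_mul, neg_sq, mul_pow, div_pow, sq_abs]
    field_simp
    linear_combination -hr
  rw [mul_transpose_eq_init_add_vecMulVec_last, hinit, hlast, one_sub_smul_vecMulVec_mul_transpose,
    smul_vecMulVec, vecMulVec_smul, smul_smul, ← sq, ← hnorm, add_assoc, ← add_smul]
  rcases eq_or_ne x 0 with rfl | hx
  · simp
  · rw [one_sub_div_sq_mul_sub_two_mul_add_sq_eq_zero (by positivity) hunit, zero_smul, add_zero]

theorem stmt_14 (n : ℕ) (c : ℝ) (hc : 0 < c) (x : EuclideanSpace ℝ (Fin n)) (y : ℝ)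
    (hx : x ≠ 0) (hy : y ≠ 0)
    (r : ℝ) (hrpos : 0 < r) (hr : r ^ 2 = ‖x‖ ^ 2 * c ^ 4 + y ^ 2)
    (A' : Matrix (Fin n) (Fin (n + 1)) ℝ)
    (hA' : ∀ (i : Fin n) (j : Fin (n + 1)), A' i j =
      if h : (j : ℕ) < n then
        (if i = ⟨j, h⟩ then 1 else 0) - ((1 - |y| / r) / ‖x‖ ^ 2) * x i * x ⟨j, h⟩
      else -(c ^ 2 / (r * |y|)) * x i * y) :
    A' * A'.transpose = 1 :=
  stmt_14_general n c x y hy r hr A' hA'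
end
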